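/- arXiv:2206.14843 — 10 statements merged into one kernel-verified Lean document; each statement's English description precedes it below -/
import Mathlib

section
/- For a finite group G, σ(G) = 3 if and only if there exists a normal subgroup N of G such that the quotient G/N is isomorphic to the Klein four-group (Z/2 × Z/2). -/
/-- A covering of a group `G` is a finite collection of proper subgroups of `G`
whose set-theoretic union is all of `G`. -/
def IsCovering {G : Type*} [Group G] (C : Finset (Subgroup G)) : Prop :=
  (∀ H ∈ C, H ≠ (⊤ : Subgroup G)) ∧ ∀ g : G, ∃ H ∈ C, g ∈ H

/-- `groupSigma G` is the smallest cardinality of a covering of `G`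
(`⊤ = ∞` if `G` has no covering). -/
noncomputable def groupSigma (G : Type*) [Group G] : ℕ∞ :=
  sInf {n : ℕ∞ | ∃ C : Finset (Subgroup G), IsCovering C ∧ (C.card : ℕ∞) = n}

private lemma union_two {G : Type*} [Group G] (H K : Subgroup G)
    (h : ∀ g : G, g ∈ H ∨ g ∈ K) : H = ⊤ ∨ K = ⊤ := by
  by_contra hc
  push_neg at hc
  obtain ⟨hH, hK⟩ := hc
  have hHK : ∃ a, a ∈ H ∧ a ∉ K := by
    by_contra h'
    push_neg at h'
    exact hK ((Subgroup.eq_top_iff' K).mpr fun g => (h g).elim (fun hg => h' g hg) id)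
  have hKH : ∃ b, b ∈ K ∧ b ∉ H := by
    by_contra h'
    push_neg at h'
    exact hH ((Subgroup.eq_top_iff' H).mpr fun g => (h g).elim id (fun hg => h' g hg))
  obtain ⟨a, haH, haK⟩ := hHK
  obtain ⟨b, hbK, hbH⟩ := hKH
  rcases h (a * b) with hab | hab
  · exact hbH (by simpa using H.mul_mem (H.inv_mem haH) hab)
  · exact haK (by simpa using K.mul_mem hab (K.inv_mem hbK))

private lemma covering_card_ge {G : Type*} [Group G] {C : Finset (Subgroup G)}
    (hC : IsCovering C) : 3 ≤ C.card := by
  classical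
  obtain ⟨hproper, hcov⟩ := hC
  by_contra h
  push_neg at h
  have h2 : C.card = 0 ∨ C.card = 1 ∨ C.card = 2 := by omega
  rcases h2 with h0 | h1 | h2
  · obtain ⟨H, hH, -⟩ := hcov 1
    rw [Finset.card_eq_zero.mp h0] at hH
    exact absurd hH (Finset.notMem_empty H)
  · obtain ⟨H, rfl⟩ := Finset.card_eq_one.mp h1
    have : ∀ g : G, g ∈ H ∨ g ∈ H := by
      intro g
      obtain ⟨H', hH', hg⟩ := hcov g
      rw [Finset.mem_singleton] at hH'
      exact Or.inl (hH' ▸ hg)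
    rcases union_two H H this with ht | ht <;>
      exact hproper H (Finset.mem_singleton_self H) ht
  · obtain ⟨H, K, hne, hCeq⟩ := Finset.card_eq_two.mp h2
    have : ∀ g : G, g ∈ H ∨ g ∈ K := by
      intro g
      obtain ⟨H', hH', hg⟩ := hcov g
      rw [hCeq] at hH'
      simp only [Finset.mem_insert, Finset.mem_singleton] at hH'
      rcases hH' with rfl | rfl
      · exact Or.inl hg
      · exact Or.inr hg
    rcases union_two H K this with ht | ht
    · exact hproper H (by rw [hCeq]; simp) ht
    · exact hproper K (by rw [hCeq]; simp) ht

private lemma prod_mem_of_notMem {G : Type*} [Group G] {H1 H2 H3 : Subgroup G}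
    (cov : ∀ g : G, g ∈ H1 ∨ g ∈ H2 ∨ g ∈ H3)
    {a1 d c : G}
    (ha1 : a1 ∈ H1) (ha12 : a1 ∉ H2) (ha13 : a1 ∉ H3)
    (hd2 : d ∈ H2) (hd1 : d ∉ H1) (hd3 : d ∉ H3)
    (hc3 : c ∈ H3) (hc1 : c ∉ H1) (hc2 : c ∉ H2) :
    ∀ a b : G, a ∉ H1 → b ∉ H1 → a * b ∈ H1 := by
  have h23 : ∀ z : G, z ∈ H2 → z ∈ H3 → z ∈ H1 := by
    intro z hz2 hz3
    rcases cov (z * a1) with h | h | h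
    · simpa using H1.mul_mem h (H1.inv_mem ha1)
    · exact absurd (by simpa using H2.mul_mem (H2.inv_mem hz2) h) ha12
    · exact absurd (by simpa using H3.mul_mem (H3.inv_mem hz3) h) ha13
  have claimA : ∀ x y : G, x ∈ H2 → x ∉ H1 → y ∈ H3 → y ∉ H1 → x * y ∈ H1 := by
    intro x y hx2 hx1 hy3 hy1
    rcases cov (x * y) with h | h | h
    · exact h
    · have : y ∈ H2 := by simpa using H2.mul_mem (H2.inv_mem hx2) h
      exact absurd (h23 y this hy3) hy1
    · have : x ∈ H3 := by simpa using H3.mul_mem h (H3.inv_mem hy3)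
      exact absurd (h23 x hx2 this) hx1
  have claimB : ∀ x y : G, x ∈ H3 → x ∉ H1 → y ∈ H2 → y ∉ H1 → x * y ∈ H1 := by
    intro x y hx3 hx1 hy2 hy1
    rcases cov (x * y) with h | h | h
    · exact h
    · have : x ∈ H2 := by simpa using H2.mul_mem h (H2.inv_mem hy2)
      exact absurd (h23 x this hx3) hx1
    · have : y ∈ H3 := by simpa using H3.mul_mem (H3.inv_mem hx3) h
      exact absurd (h23 y hy2 this) hy1
  intro a b ha hb
  have hc1' : c⁻¹ ∉ H1 := fun h => hc1 (by simpa using H1.inv_mem h)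
  have hd1' : d⁻¹ ∉ H1 := fun h => hd1 (by simpa using H1.inv_mem h)
  rcases cov a with h | ha2 | ha3
  · exact absurd h ha
  · rcases cov b with h | hb2 | hb3
    · exact absurd h hb
    · have h1 : a * c ∈ H1 := claimA a c ha2 ha hc3 hc1
      have h2 : c⁻¹ * b ∈ H1 := claimB c⁻¹ b (H3.inv_mem hc3) hc1' hb2 hb
      have := H1.mul_mem h1 h2
      simpa [mul_assoc] using this
    · exact claimA a b ha2 ha hb3 hb
  · rcases cov b with h | hb2 | hb3
    · exact absurd h hb
    · exact claimB a b ha3 ha hb2 hb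
    · have h1 : a * d ∈ H1 := claimB a d ha3 ha hd2 hd1
      have h2 : d⁻¹ * b ∈ H1 := claimA d⁻¹ b (H2.inv_mem hd2) hd1' hb3 hb
      have := H1.mul_mem h1 h2
      simpa [mul_assoc] using this

private lemma exists_hom_zmod2 {G : Type*} [Group G] (H : Subgroup G)
    (hQ : ∀ a b : G, a ∉ H → b ∉ H → a * b ∈ H) :
    ∃ φ : G →* Multiplicative (ZMod 2),
      (∀ g : G, g ∈ H → φ g = 1) ∧ (∀ g : G, g ∉ H → φ g = Multiplicative.ofAdd 1) := by
  classical
  refine ⟨MonoidHom.mk' (fun g => if g ∈ H then 1 else Multiplicative.ofAdd 1) ?_,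
    fun g hg => if_pos hg, fun g hg => if_neg hg⟩
  intro a b
  by_cases ha : a ∈ H <;> by_cases hb : b ∈ H
  · simp [ha, hb, H.mul_mem ha hb]
  · have hab : a * b ∉ H := fun h => hb (by simpa using H.mul_mem (H.inv_mem ha) h)
    simp [ha, hb, hab]
  · have hab : a * b ∉ H := fun h => ha (by simpa using H.mul_mem h (H.inv_mem hb))
    simp [ha, hb, hab]
  · have hab : a * b ∈ H := hQ a b ha hb
    simp only [if_pos hab, if_neg ha, if_neg hb]
    decide

/-- For a finite group `G`, `σ(G) = 3` if and only if there is a normal subgroup `N`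
with `G/N` isomorphic to the Klein four-group. -/
theorem sigma_eq_three_iff_klein_quotient (G : Type*) [Group G] [Finite G] :
    groupSigma G = 3 ↔
      ∃ (N : Subgroup G) (hN : N.Normal),
        letI := hN
        Nonempty ((G ⧸ N) ≃* Multiplicative (ZMod 2) × Multiplicative (ZMod 2)) := by
  classical
  constructor
  · intro hσ
    rw [groupSigma] at hσ
    have h4 : sInf {n : ℕ∞ | ∃ C : Finset (Subgroup G), IsCovering C ∧ (C.card : ℕ∞) = n}
        < 4 := by rw [hσ]; norm_num
    obtain ⟨n, hn, hlt⟩ := sInf_lt_iff.mp h4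
    obtain ⟨C, hC, rfl⟩ := hn
    have hcard : C.card = 3 := by
      have h3 := covering_card_ge hC
      have : C.card < 4 := by exact_mod_cast hlt
      omega
    obtain ⟨H1, H2, H3, h12, h13, h23, rfl⟩ := Finset.card_eq_three.mp hcard
    have hp1 : H1 ≠ ⊤ := hC.1 H1 (by simp)
    have hp2 : H2 ≠ ⊤ := hC.1 H2 (by simp)
    have hp3 : H3 ≠ ⊤ := hC.1 H3 (by simp)
    have cov : ∀ g : G, g ∈ H1 ∨ g ∈ H2 ∨ g ∈ H3 := by
      intro g
      obtain ⟨H, hH, hg⟩ := hC.2 g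
      simp only [Finset.mem_insert, Finset.mem_singleton] at hH
      rcases hH with rfl | rfl | rfl <;> tauto
    -- existence of elements in exactly one subgroup
    have ex1 : ∃ a, a ∈ H1 ∧ a ∉ H2 ∧ a ∉ H3 := by
      have : ¬ ∀ g : G, g ∈ H2 ∨ g ∈ H3 := by
        intro h; rcases union_two H2 H3 h with ht | ht
        · exact hp2 ht
        · exact hp3 ht
      push_neg at this
      obtain ⟨a, ha2, ha3⟩ := this
      exact ⟨a, (cov a).resolve_right (by tauto), ha2, ha3⟩
    have ex2 : ∃ d, d ∈ H2 ∧ d ∉ H1 ∧ d ∉ H3 := by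
      have : ¬ ∀ g : G, g ∈ H1 ∨ g ∈ H3 := by
        intro h; rcases union_two H1 H3 h with ht | ht
        · exact hp1 ht
        · exact hp3 ht
      push_neg at this
      obtain ⟨d, hd1, hd3⟩ := this
      have := cov d
      exact ⟨d, by tauto, hd1, hd3⟩
    have ex3 : ∃ c, c ∈ H3 ∧ c ∉ H1 ∧ c ∉ H2 := by
      have : ¬ ∀ g : G, g ∈ H1 ∨ g ∈ H2 := by
        intro h; rcases union_two H1 H2 h with ht | ht
        · exact hp1 ht
        · exact hp2 ht
      push_neg at this
      obtain ⟨c, hc1, hc2⟩ := this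
      have := cov c
      exact ⟨c, by tauto, hc1, hc2⟩
    obtain ⟨a1, ha1, ha12, ha13⟩ := ex1
    obtain ⟨d, hd2, hd1, hd3⟩ := ex2
    obtain ⟨c, hc3, hc1, hc2⟩ := ex3
    have Q1 : ∀ a b : G, a ∉ H1 → b ∉ H1 → a * b ∈ H1 :=
      prod_mem_of_notMem cov ha1 ha12 ha13 hd2 hd1 hd3 hc3 hc1 hc2
    have cov' : ∀ g : G, g ∈ H2 ∨ g ∈ H1 ∨ g ∈ H3 := fun g => by have := cov g; tauto
    have Q2 : ∀ a b : G, a ∉ H2 → b ∉ H2 → a * b ∈ H2 :=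
      prod_mem_of_notMem cov' hd2 hd1 hd3 ha1 ha12 ha13 hc3 hc2 hc1
    obtain ⟨φ1, hφ1a, hφ1b⟩ := exists_hom_zmod2 H1 Q1
    obtain ⟨φ2, hφ2a, hφ2b⟩ := exists_hom_zmod2 H2 Q2
    set f : G →* Multiplicative (ZMod 2) × Multiplicative (ZMod 2) := φ1.prod φ2 with hf
    have fa : f a1 = (1, Multiplicative.ofAdd 1) := by
      simp [hf, MonoidHom.prod_apply, hφ1a a1 ha1, hφ2b a1 ha12]
    have fd : f d = (Multiplicative.ofAdd 1, 1) := by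
      simp [hf, MonoidHom.prod_apply, hφ1b d hd1, hφ2a d hd2]
    have hsurj : Function.Surjective f := by
      intro y
      have hy : y = (1, 1) ∨ y = (1, Multiplicative.ofAdd 1) ∨
          y = (Multiplicative.ofAdd 1, 1) ∨
          y = (Multiplicative.ofAdd 1, Multiplicative.ofAdd 1) := by
        revert y; decide
      rcases hy with rfl | rfl | rfl | rfl
      · exact ⟨1, map_one f⟩
      · exact ⟨a1, fa⟩
      · exact ⟨d, fd⟩
      · refine ⟨d * a1, ?_⟩
        rw [map_mul, fa, fd]
        decide
    exact ⟨f.ker, inferInstance, ⟨QuotientGroup.quotientKerEquivOfSurjective f hsurj⟩⟩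
  · rintro ⟨N, hN, ⟨e⟩⟩
    letI := hN
    set M := Multiplicative (ZMod 2)
    set ψ : G →* M × M := e.toMonoidHom.comp (QuotientGroup.mk' N) with hψdef
    have hψ : Function.Surjective ψ := e.surjective.comp (QuotientGroup.mk'_surjective N)
    set K1 := ((MonoidHom.fst M M).comp ψ).ker with hK1
    set K2 := ((MonoidHom.snd M M).comp ψ).ker with hK2
    set K3 := (((MonoidHom.fst M M) * (MonoidHom.snd M M)).comp ψ).ker with hK3
    have mem1 : ∀ g : G, g ∈ K1 ↔ (ψ g).1 = 1 := fun g => Iff.rfl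
    have mem2 : ∀ g : G, g ∈ K2 ↔ (ψ g).2 = 1 := fun g => Iff.rfl
    have mem3 : ∀ g : G, g ∈ K3 ↔ (ψ g).1 * (ψ g).2 = 1 := fun g => Iff.rfl
    obtain ⟨u, hu⟩ := hψ (Multiplicative.ofAdd 1, 1)
    obtain ⟨v, hv⟩ := hψ (1, Multiplicative.ofAdd 1)
    have hx1 : (Multiplicative.ofAdd (1 : ZMod 2)) ≠ 1 := by decide
    have hvK1 : v ∈ K1 := by rw [mem1, hv]
    have hvK2 : v ∉ K2 := by rw [mem2, hv]; exact hx1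
    have hvK3 : v ∉ K3 := by rw [mem3, hv]; decide
    have huK1 : u ∉ K1 := by rw [mem1, hu]; exact hx1
    have huK2 : u ∈ K2 := by rw [mem2, hu]
    have huK3 : u ∉ K3 := by rw [mem3, hu]; decide
    have hp1 : K1 ≠ ⊤ := fun h => huK1 (h ▸ Subgroup.mem_top u)
    have hp2 : K2 ≠ ⊤ := fun h => hvK2 (h ▸ Subgroup.mem_top v)
    have hp3 : K3 ≠ ⊤ := fun h => huK3 (h ▸ Subgroup.mem_top u)
    have h12 : K1 ≠ K2 := fun h => hvK2 (h ▸ hvK1)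
    have h13 : K1 ≠ K3 := fun h => hvK3 (h ▸ hvK1)
    have h23 : K2 ≠ K3 := fun h => huK3 (h ▸ huK2)
    set C : Finset (Subgroup G) := {K1, K2, K3} with hCdef
    have hcov : IsCovering C := by
      constructor
      · intro H hH
        simp only [hCdef, Finset.mem_insert, Finset.mem_singleton] at hH
        rcases hH with rfl | rfl | rfl
        · exact hp1
        · exact hp2
        · exact hp3
      · intro g
        have hy : (ψ g).1 = 1 ∨ (ψ g).2 = 1 ∨ (ψ g).1 * (ψ g).2 = 1 := by
          have : ∀ y : M × M, y.1 = 1 ∨ y.2 = 1 ∨ y.1 * y.2 = 1 := by decide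
          exact this (ψ g)
        rcases hy with h | h | h
        · exact ⟨K1, by simp [hCdef], (mem1 g).mpr h⟩
        · exact ⟨K2, by simp [hCdef], (mem2 g).mpr h⟩
        · exact ⟨K3, by simp [hCdef], (mem3 g).mpr h⟩
    have hcard : C.card = 3 := by
      rw [hCdef, Finset.card_insert_of_notMem (by simp [h12, h13]),
        Finset.card_insert_of_notMem (by simp [h23]), Finset.card_singleton]
    rw [groupSigma]
    apply le_antisymm
    · apply sInf_le
      exact ⟨C, hcov, by rw [hcard]; rfl⟩
    · apply le_sInf
      rintro n ⟨C', hC', rfl⟩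
      exact_mod_cast covering_card_ge hC'
end

section
/- If G is a finite non-cyclic group and p is the smallest prime divisor of the order of G, then G cannot be written as the union of p or fewer proper subgroups; that is, any covering of G has more than p members. -/
/-- If `G` is a finite non-cyclic group and `p` is the smallest prime divisor of `|G|`,
then any covering of `G` has more than `p` members. -/
theorem covering_card_gt_smallest_prime_divisor {G : Type*} [Group G] [Finite G]
    (hnc : ¬IsCyclic G) (p : ℕ) (hp : p.Prime) (hdvd : p ∣ Nat.card G)
    (hmin : ∀ q : ℕ, q.Prime → q ∣ Nat.card G → p ≤ q)
    (C : Finset (Subgroup G)) (hC : IsCovering C) :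
    p < C.card := by
  by_contra hlt
  push_neg at hlt
  haveI := Fintype.ofFinite G
  classical
  obtain ⟨hproper, hcover⟩ := hC
  have hp2 := hp.two_le
  have key : ∀ H ∈ C, p * Nat.card H ≤ Nat.card G := by
    intro H hH
    have h1 : Nat.card H * H.index = Nat.card G := H.card_mul_index
    have hidx : H.index ≠ 1 := fun h => hproper H hH (Subgroup.index_eq_one.mp h)
    have hipos : 0 < H.index := Nat.pos_of_ne_zero (Subgroup.index_ne_zero_of_finite)
    have hq : p ≤ H.index := by
      have hqp : (H.index).minFac.Prime := Nat.minFac_prime hidx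
      have hdv : H.index.minFac ∣ Nat.card G :=
        dvd_trans (Nat.minFac_dvd _) (h1 ▸ Dvd.intro_left _ rfl)
      exact le_trans (hmin _ hqp hdv) (Nat.minFac_le hipos)
    calc p * Nat.card H ≤ H.index * Nat.card H := Nat.mul_le_mul_right _ hq
      _ = Nat.card G := by rw [mul_comm]; exact h1
  set n := Nat.card G with hn_def
  have hn : 0 < n := Nat.card_pos
  have hcount : n - 1 ≤ ∑ H ∈ C, (Nat.card H - 1) := by
    have hsub : (Finset.univ.erase (1 : G)) ⊆
        C.biUnion (fun H => (H : Set G).toFinset.erase 1) := by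
      intro g hg
      obtain ⟨H, hH, hgH⟩ := hcover g
      simp only [Finset.mem_biUnion]
      refine ⟨H, hH, ?_⟩
      rw [Finset.mem_erase] at hg ⊢
      exact ⟨hg.1, by simpa using hgH⟩
    calc n - 1 = (Finset.univ.erase (1 : G)).card := by
          rw [Finset.card_erase_of_mem (Finset.mem_univ _)]
          simp [hn_def, Nat.card_eq_fintype_card]
      _ ≤ (C.biUnion (fun H => (H : Set G).toFinset.erase 1)).card :=
          Finset.card_le_card hsub
      _ ≤ ∑ H ∈ C, ((H : Set G).toFinset.erase 1).card := Finset.card_biUnion_le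
      _ = ∑ H ∈ C, (Nat.card H - 1) := by
          refine Finset.sum_congr rfl fun H hH => ?_
          rw [Finset.card_erase_of_mem (by simp [Set.mem_toFinset]), Set.toFinset_card]
          simp [Nat.card_eq_fintype_card]
  have h2 : p * (n - 1) ≤ p * ∑ H ∈ C, (Nat.card H - 1) := Nat.mul_le_mul_left _ hcount
  have h3 : p * ∑ H ∈ C, (Nat.card H - 1) ≤ C.card * (n - p) := by
    rw [Finset.mul_sum]
    calc ∑ H ∈ C, p * (Nat.card H - 1) ≤ ∑ _H ∈ C, (n - p) := by
          refine Finset.sum_le_sum fun H hH => ?_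
          have hk := key H hH
          have hcpos : 0 < Nat.card H := Nat.card_pos
          have : p * (Nat.card H - 1) = p * Nat.card H - p := by
            rw [Nat.mul_sub, mul_one]
          omega
      _ = C.card * (n - p) := by rw [Finset.sum_const, smul_eq_mul]
  have h4 : C.card * (n - p) ≤ p * (n - p) := Nat.mul_le_mul_right _ hlt
  have h5 : p * (n - 1) ≤ p * (n - p) := le_trans h2 (le_trans h3 h4)
  have h6 : n - 1 ≤ n - p := Nat.le_of_mul_le_mul_left h5 (by omega)
  have hpn : p ≤ n := Nat.le_of_dvd hn hdvd
  omega
end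

section
/- If G is a finite group such that the exponent of G does not divide the order of any maximal subgroup of G, then G has no equal covering. -/
/-- An equal covering of `G` is a covering in which all members have the same order. -/
def IsEqualCovering {G : Type*} [Group G] (C : Finset (Subgroup G)) : Prop :=
  IsCovering C ∧ ∀ H ∈ C, ∀ K ∈ C, Nat.card H = Nat.card K

/-- If the exponent of a finite group `G` does not divide the order of any maximal
subgroup of `G` (a maximal subgroup being a coatom of the subgroup lattice),
then `G` has no equal covering. -/
theorem no_equal_covering_of_exponent_not_dvd_maximal {G : Type*} [Group G] [Finite G]
    (h : ∀ M : Subgroup G, IsCoatom M → ¬(Monoid.exponent G ∣ Nat.card M)) :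
    ¬∃ C : Finset (Subgroup G), IsEqualCovering C := by
  rintro ⟨C, ⟨⟨hprop, hcov⟩, heq⟩⟩
  obtain ⟨H, hH, -⟩ := hcov 1
  -- exponent divides Nat.card H
  have hexp : Monoid.exponent G ∣ Nat.card H := by
    rw [Monoid.exponent_dvd]
    intro g
    obtain ⟨K, hK, hgK⟩ := hcov g
    have hord : orderOf g ∣ Nat.card K := Subgroup.orderOf_dvd_natCard K hgK
    rw [heq K hK H hH] at hord
    exact hord
  -- H is proper, so contained in a coatom M
  rcases (eq_top_or_exists_le_coatom H) with htop | ⟨M, hM, hHM⟩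
  · exact hprop H hH htop
  · exact h M hM (hexp.trans (Subgroup.card_dvd_of_le hHM))
end

section
/- If n is odd, then the dihedral group D_{2n} of order 2n has no equal covering. -/
/-- If `n` is odd, the dihedral group `D_{2n}` of order `2n` has no equal covering. -/
theorem dihedral_odd_no_equal_covering (n : ℕ) (hn : Odd n) :
    ¬∃ C : Finset (Subgroup (DihedralGroup n)), IsEqualCovering C := by
  rintro ⟨C, ⟨⟨hprop, hcov⟩, heq⟩⟩
  have hn0 : n ≠ 0 := hn.pos.ne'
  haveI : NeZero n := ⟨hn0⟩
  obtain ⟨H, hHC, hrH⟩ := hcov (DihedralGroup.r 1)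
  -- n ∣ card H
  have hord : orderOf (⟨DihedralGroup.r 1, hrH⟩ : H) = n :=
    (orderOf_injective H.subtype H.subtype_injective _).symm.trans
      DihedralGroup.orderOf_r_one
  have hdvd1 : n ∣ Nat.card H := by
    have h := orderOf_dvd_natCard (⟨DihedralGroup.r 1, hrH⟩ : H)
    rwa [hord] at h
  have hdvd2 : Nat.card H ∣ 2 * n := by
    rw [← DihedralGroup.nat_card]
    exact Subgroup.card_subgroup_dvd_card H
  have hne : Nat.card H ≠ 2 * n := by
    intro h
    apply hprop H hHC
    apply Subgroup.eq_top_of_card_eq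
    rw [h, DihedralGroup.nat_card]
  have hcard : Nat.card H = n := by
    obtain ⟨k, hk⟩ := hdvd1
    rw [hk] at hdvd2 hne ⊢
    have hk2 : k ∣ 2 := (mul_dvd_mul_iff_left (a := n) (by exact_mod_cast hn0)).mp
      (by rwa [mul_comm 2 n] at hdvd2)
    rcases (Nat.dvd_prime Nat.prime_two).mp hk2 with rfl | rfl
    · omega
    · omega
  obtain ⟨K, hKC, hsK⟩ := hcov (DihedralGroup.sr 0)
  have hK : Nat.card K = n := (heq K hKC H hHC).trans hcard
  have hordK : orderOf (⟨DihedralGroup.sr 0, hsK⟩ : K) = 2 :=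
    (orderOf_injective K.subtype K.subtype_injective _).symm.trans
      (DihedralGroup.orderOf_sr 0)
  have : (2 : ℕ) ∣ n := by
    have h := orderOf_dvd_natCard (⟨DihedralGroup.sr 0, hsK⟩ : K)
    rwa [hordK, hK] at h
  rw [Nat.odd_iff] at hn
  omega
end

section
/- If n is even and n ≥ 2, then in the dihedral group D_{2n} = ⟨r, s⟩ of order 2n the collection {⟨r⟩, ⟨r², s⟩, ⟨r², rs⟩} is an equal covering of D_{2n} consisting of three subgroups each of order n, and consequently σ(D_{2n}) = 3. -/
open DihedralGroup

section aux
variable {n : ℕ}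

/-- The parity homomorphism with twist `c`. -/
def phi (h : (2:ℕ) ∣ n) (c : ZMod 2) : DihedralGroup n →* Multiplicative (ZMod 2) where
  toFun x := Multiplicative.ofAdd (match x with
    | DihedralGroup.r i => ZMod.castHom h (ZMod 2) i
    | DihedralGroup.sr i => ZMod.castHom h (ZMod 2) i + c)
  map_one' := by
    show Multiplicative.ofAdd (ZMod.castHom h (ZMod 2) 0) = 1
    simp
  map_mul' := by
    rintro (i | i) (j | j) <;>
      simp only [r_mul_r, r_mul_sr, sr_mul_r, sr_mul_sr, map_add, map_sub, ← ofAdd_add] <;>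
      congr 1 <;> ring_nf <;> rw [CharTwo.sub_eq_add] <;> ring_nf <;>
      simp [CharTwo.two_eq_zero]

@[simp] lemma phi_r (h : (2:ℕ) ∣ n) (c : ZMod 2) (i : ZMod n) :
    phi h c (DihedralGroup.r i) = Multiplicative.ofAdd (ZMod.castHom h (ZMod 2) i) := rfl

@[simp] lemma phi_sr (h : (2:ℕ) ∣ n) (c : ZMod 2) (i : ZMod n) :
    phi h c (DihedralGroup.sr i) = Multiplicative.ofAdd (ZMod.castHom h (ZMod 2) i + c) := rfl

lemma r_mem_closure (h : (2:ℕ) ∣ n) [NeZero n] (d i : ZMod n)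
    (hi : ZMod.castHom h (ZMod 2) i = 0) :
    DihedralGroup.r i ∈ Subgroup.closure {(r 1 : DihedralGroup n) ^ 2, DihedralGroup.sr d} := by
  have h2 : 2 ∣ i.val := by
    rw [ZMod.castHom_apply, ← ZMod.natCast_val] at hi
    exact (ZMod.natCast_eq_zero_iff _ _).mp hi
  have hrw : DihedralGroup.r i = ((r 1 : DihedralGroup n) ^ 2) ^ (i.val / 2) := by
    rw [← pow_mul, r_one_pow]
    congr 1
    rw [Nat.mul_div_cancel' h2, ZMod.natCast_val, ZMod.cast_id]
  rw [hrw]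
  exact pow_mem (Subgroup.subset_closure (Set.mem_insert _ _)) _

lemma ker_phi (h : (2:ℕ) ∣ n) [NeZero n] (c : ZMod 2) (d : ZMod n)
    (hd : ZMod.castHom h (ZMod 2) d = c) :
    (phi h c).ker = Subgroup.closure {(r 1 : DihedralGroup n) ^ 2, DihedralGroup.sr d} := by
  apply le_antisymm
  · intro x hx
    rw [MonoidHom.mem_ker] at hx
    cases x with
    | r i =>
        have hi : ZMod.castHom h (ZMod 2) i = 0 := by
          simpa using hx
        exact r_mem_closure h d i hi
    | sr i =>
        have hi : ZMod.castHom h (ZMod 2) i + c = 0 := by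
          exact Multiplicative.ofAdd.injective
            (show Multiplicative.ofAdd (ZMod.castHom h (ZMod 2) i + c) = Multiplicative.ofAdd 0 from hx)
        have hid : ZMod.castHom h (ZMod 2) (i - d) = 0 := by
          rw [map_sub, hd]
          rw [CharTwo.sub_eq_add]
          rwa [show ZMod.castHom h (ZMod 2) i + c = _ + _ from rfl] at hi
        have : DihedralGroup.sr i = DihedralGroup.sr d * DihedralGroup.r (i - d) := by
          rw [sr_mul_r]; ring_nf
        rw [this]
        exact mul_mem (Subgroup.subset_closure (Set.mem_insert_of_mem _ rfl))
          (r_mem_closure h d _ hid)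
  · rw [Subgroup.closure_le]
    rintro x (rfl | rfl) <;> rw [SetLike.mem_coe, MonoidHom.mem_ker]
    · have h2 : (r 1 : DihedralGroup n) ^ 2 = DihedralGroup.r ((2 : ℕ) : ZMod n) := by
        rw [r_one_pow]
      have h3 : ZMod.castHom h (ZMod 2) ((2 : ℕ) : ZMod n) = 0 := by
        rw [map_natCast]; decide
      rw [h2, phi_r, h3]
      simp
    · rw [phi_sr, hd]
      simp [CharTwo.add_self_eq_zero]

lemma phi_surjective (h : (2:ℕ) ∣ n) (c : ZMod 2) : Function.Surjective (phi h c) := by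
  intro x
  have hx : Multiplicative.toAdd x = 0 ∨ Multiplicative.toAdd x = 1 := by
    have : ∀ y : ZMod 2, y = 0 ∨ y = 1 := by decide
    exact this _
  rcases hx with hx | hx
  · exact ⟨DihedralGroup.r 0, by rw [phi_r, map_zero, ← hx, ofAdd_toAdd]⟩
  · exact ⟨DihedralGroup.r 1, by rw [phi_r, map_one, ← hx, ofAdd_toAdd]⟩

lemma card_ker_phi (h : (2:ℕ) ∣ n) [NeZero n] (c : ZMod 2) :
    Nat.card (phi h c).ker = n := by
  have h1 : Nat.card (phi h c).ker * (phi h c).ker.index = 2 * n := by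
    rw [Subgroup.card_mul_index, nat_card]
  have h2 : (phi h c).ker.index = 2 := by
    rw [Subgroup.index_ker, MonoidHom.range_eq_top.mpr (phi_surjective h c)]
    rw [Subgroup.card_top, Nat.card_eq_fintype_card]
    simp
  rw [h2] at h1
  omega

lemma sr_not_mem_zpowers (i : ZMod n) :
    DihedralGroup.sr i ∉ Subgroup.zpowers (r 1 : DihedralGroup n) := by
  rintro ⟨k, hk⟩
  rcases k with m | m
  · simp only [Int.ofNat_eq_coe, zpow_natCast, r_one_pow] at hk
    exact absurd hk (by simp)
  · simp only [zpow_negSucc, r_one_pow] at hk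
    rw [show ((DihedralGroup.r ((m+1 : ℕ) : ZMod n))⁻¹ : DihedralGroup n)
        = DihedralGroup.r (-((m+1 : ℕ) : ZMod n)) from rfl] at hk
    exact absurd hk (by simp)

lemma ker_phi_ne_top (h : (2:ℕ) ∣ n) (c : ZMod 2) (d : ZMod n)
    (hd : ZMod.castHom h (ZMod 2) d = c) : (phi h c).ker ≠ ⊤ := by
  intro htop
  have : DihedralGroup.sr (d + 1) ∈ (phi h c).ker := htop ▸ Subgroup.mem_top _
  rw [MonoidHom.mem_ker, phi_sr] at this
  have h1 : ZMod.castHom h (ZMod 2) (d + 1) + c = 0 :=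
    Multiplicative.ofAdd.injective this
  rw [map_add, hd, map_one] at h1
  rw [show c + 1 + c = 1 + (c + c) by ring, CharTwo.add_self_eq_zero, add_zero] at h1
  exact one_ne_zero h1

/-- A group is not the union of two proper subgroups. -/
lemma not_union_two {G : Type*} [Group G] (H K : Subgroup G) (hH : H ≠ ⊤) (hK : K ≠ ⊤) :
    ∃ g : G, g ∉ H ∧ g ∉ K := by
  obtain ⟨a, ha⟩ : ∃ a, a ∉ H := by
    by_contra hcon; push_neg at hcon
    exact hH (Subgroup.eq_top_iff' H |>.mpr hcon)
  obtain ⟨b, hb⟩ : ∃ b, b ∉ K := by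
    by_contra hcon; push_neg at hcon
    exact hK (Subgroup.eq_top_iff' K |>.mpr hcon)
  by_cases haK : a ∈ K
  · by_cases hbH : b ∈ H
    · refine ⟨a * b, fun hab => ha ?_, fun hab => hb ?_⟩
      · have := mul_mem hab (inv_mem hbH); simpa using this
      · have := mul_mem (inv_mem haK) hab; simpa using this
    · exact ⟨b, hbH, hb⟩
  · exact ⟨a, ha, haK⟩

lemma sigma_ge_three {G : Type*} [Group G] (C : Finset (Subgroup G)) (hC : IsCovering C) :
    3 ≤ C.card := by
  classical
  by_contra hcon
  push_neg at hcon
  interval_cases h : C.card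
  · obtain ⟨H, hH, _⟩ := hC.2 1
    rw [Finset.card_eq_zero] at h
    simp [h] at hH
  · obtain ⟨H, hH⟩ := Finset.card_eq_one.mp h
    refine hC.1 H (by simp [hH]) ?_
    rw [Subgroup.eq_top_iff']
    intro g
    obtain ⟨K, hK, hg⟩ := hC.2 g
    rw [hH, Finset.mem_singleton] at hK
    rwa [hK] at hg
  · obtain ⟨H, K, hne, hHK⟩ := Finset.card_eq_two.mp h
    obtain ⟨g, hgH, hgK⟩ := not_union_two H K (hC.1 H (by simp [hHK])) (hC.1 K (by simp [hHK]))
    obtain ⟨L, hL, hg⟩ := hC.2 g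
    rw [hHK, Finset.mem_insert, Finset.mem_singleton] at hL
    rcases hL with rfl | rfl
    · exact hgH hg
    · exact hgK hg

end aux

open scoped Classical in
/-- If `n` is even, `n ≥ 2`, then in `D_{2n} = ⟨r, s⟩` the collection
`{⟨r⟩, ⟨r², s⟩, ⟨r², rs⟩}` is an equal covering by three subgroups each of order `n`,
and consequently `σ(D_{2n}) = 3`. -/
theorem dihedral_even_equal_covering (n : ℕ) (hn : Even n) (hn2 : 2 ≤ n) :
    IsEqualCovering
        ({Subgroup.zpowers (r 1 : DihedralGroup n),
          Subgroup.closure {(r 1 : DihedralGroup n) ^ 2, sr 0},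
          Subgroup.closure {(r 1 : DihedralGroup n) ^ 2, r 1 * sr 0}} :
          Finset (Subgroup (DihedralGroup n))) ∧
      ({Subgroup.zpowers (r 1 : DihedralGroup n),
          Subgroup.closure {(r 1 : DihedralGroup n) ^ 2, sr 0},
          Subgroup.closure {(r 1 : DihedralGroup n) ^ 2, r 1 * sr 0}} :
          Finset (Subgroup (DihedralGroup n))).card = 3 ∧
      Nat.card (Subgroup.zpowers (r 1 : DihedralGroup n)) = n ∧
      Nat.card (Subgroup.closure {(r 1 : DihedralGroup n) ^ 2, sr 0}) = n ∧
      Nat.card (Subgroup.closure {(r 1 : DihedralGroup n) ^ 2, r 1 * sr 0}) = n ∧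
      groupSigma (DihedralGroup n) = 3 := by
  haveI : NeZero n := ⟨by omega⟩
  have h : (2:ℕ) ∣ n := hn.two_dvd
  set H1 := Subgroup.zpowers (r 1 : DihedralGroup n) with hH1
  set H2 := Subgroup.closure {(r 1 : DihedralGroup n) ^ 2, sr 0} with hH2
  set H3 := Subgroup.closure {(r 1 : DihedralGroup n) ^ 2, r 1 * sr 0} with hH3
  have hd0 : ZMod.castHom h (ZMod 2) (0 : ZMod n) = 0 := map_zero _
  have hd1 : ZMod.castHom h (ZMod 2) (-1 : ZMod n) = 1 := by
    rw [map_neg, map_one, CharTwo.neg_eq]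
  have hsr : (r 1 : DihedralGroup n) * sr 0 = DihedralGroup.sr (-1) := by
    rw [r_mul_sr]; ring_nf
  have hk2 : H2 = (phi h 0).ker := (ker_phi h 0 0 hd0).symm
  have hk3 : H3 = (phi h 1).ker := by
    rw [hH3, hsr]; exact (ker_phi h 1 (-1) hd1).symm
  -- cards
  have c1 : Nat.card H1 = n := by rw [hH1, Nat.card_zpowers, orderOf_r_one]
  have c2 : Nat.card H2 = n := by rw [hk2]; exact card_ker_phi h 0
  have c3 : Nat.card H3 = n := by rw [hk3]; exact card_ker_phi h 1
  -- properness
  have p1 : H1 ≠ ⊤ := by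
    intro ht
    apply sr_not_mem_zpowers (0 : ZMod n)
    rw [← hH1, ht]; exact Subgroup.mem_top _
  have p2 : H2 ≠ ⊤ := hk2 ▸ ker_phi_ne_top h 0 0 hd0
  have p3 : H3 ≠ ⊤ := hk3 ▸ ker_phi_ne_top h 1 (-1) hd1
  -- memberships / distinctness
  have m2 : DihedralGroup.sr (0 : ZMod n) ∈ H2 :=
    Subgroup.subset_closure (Set.mem_insert_of_mem _ rfl)
  have m3 : DihedralGroup.sr (-1 : ZMod n) ∈ H3 := by
    rw [hH3, hsr]; exact Subgroup.subset_closure (Set.mem_insert_of_mem _ rfl)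
  have nm3 : DihedralGroup.sr (0 : ZMod n) ∉ H3 := by
    rw [hk3, MonoidHom.mem_ker, phi_sr, hd0, zero_add]
    intro hcon
    have h1 : (1 : ZMod 2) = 0 := Multiplicative.ofAdd.injective hcon
    exact one_ne_zero h1
  have ne12 : H1 ≠ H2 := by
    intro e
    apply sr_not_mem_zpowers (0 : ZMod n)
    rw [← hH1, e]; exact m2
  have ne13 : H1 ≠ H3 := by
    intro e
    apply sr_not_mem_zpowers (-1 : ZMod n)
    rw [← hH1, e]; exact m3
  have ne23 : H2 ≠ H3 := fun e => nm3 (e ▸ m2)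
  have hcard : ({H1, H2, H3} : Finset (Subgroup (DihedralGroup n))).card = 3 := by
    rw [Finset.card_insert_of_notMem (by simp [ne12, ne13]),
      Finset.card_insert_of_notMem (by simp [ne23]), Finset.card_singleton]
  have hcover : IsCovering ({H1, H2, H3} : Finset (Subgroup (DihedralGroup n))) := by
    constructor
    · intro H hH
      rcases Finset.mem_insert.mp hH with rfl | hH
      · exact p1
      rcases Finset.mem_insert.mp hH with rfl | hH
      · exact p2
      rw [Finset.mem_singleton] at hH; subst hH; exact p3
    · rintro (i | i)
      · refine ⟨H1, by simp, ⟨(i.val : ℤ), ?_⟩⟩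
        show (r 1 : DihedralGroup n) ^ ((i.val : ℕ) : ℤ) = DihedralGroup.r i
        rw [zpow_natCast, r_one_pow, ZMod.natCast_val, ZMod.cast_id]
      · have : ∀ y : ZMod 2, y = 0 ∨ y = 1 := by decide
        rcases this (ZMod.castHom h (ZMod 2) i) with hi | hi
        · refine ⟨H2, by simp, ?_⟩
          rw [hk2, MonoidHom.mem_ker, phi_sr, hi, add_zero]
          rfl
        · refine ⟨H3, by simp, ?_⟩
          rw [hk3, MonoidHom.mem_ker, phi_sr, hi]
          rw [show (1 : ZMod 2) + 1 = 0 from by decide]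
          rfl
  refine ⟨⟨hcover, ?_⟩, hcard, c1, c2, c3, ?_⟩
  · intro H hH K hK
    have : ∀ L ∈ ({H1, H2, H3} : Finset (Subgroup (DihedralGroup n))),
        Nat.card L = n := by
      intro L hL
      rcases Finset.mem_insert.mp hL with rfl | hL
      · exact c1
      rcases Finset.mem_insert.mp hL with rfl | hL
      · exact c2
      rw [Finset.mem_singleton] at hL; subst hL; exact c3
    rw [this H hH, this K hK]
  · apply le_antisymm
    · apply sInf_le
      exact ⟨{H1, H2, H3}, hcover, by rw [hcard]; rfl⟩
    · apply le_sInf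
      rintro m ⟨C, hC, rfl⟩
      exact_mod_cast sigma_ge_three C hC
end

section
/- If G and H are finite groups and at least one of G or H has an equal covering, then the direct product G × H has an equal covering; specifically, if {G_i : i ∈ I} is an equal covering of G, then {G_i × H : i ∈ I} is an equal covering of G × H. -/
open scoped Classical in
lemma left_equal_covering (G H : Type*) [Group G] [Group H]
    (C : Finset (Subgroup G)) (hC : IsEqualCovering C) :
    IsEqualCovering (C.image fun A => A.prod (⊤ : Subgroup H)) := by
  obtain ⟨⟨hne, hcov⟩, heq⟩ := hC
  refine ⟨⟨?_, ?_⟩, ?_⟩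
  · intro K hK
    simp only [Finset.mem_image] at hK
    obtain ⟨A, hA, rfl⟩ := hK
    intro htop
    apply hne A hA
    ext g
    simp only [Subgroup.mem_top, iff_true]
    have : (g, (1 : H)) ∈ A.prod (⊤ : Subgroup H) := htop ▸ Subgroup.mem_top _
    exact this.1
  · rintro ⟨g, h⟩
    obtain ⟨A, hA, hg⟩ := hcov g
    exact ⟨A.prod ⊤, Finset.mem_image_of_mem _ hA, hg, Subgroup.mem_top _⟩
  · intro K hK L hL
    simp only [Finset.mem_image] at hK hL
    obtain ⟨A, hA, rfl⟩ := hK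
    obtain ⟨B, hB, rfl⟩ := hL
    have eA : (A.prod (⊤ : Subgroup H) : Type _) ≃ A × (⊤ : Subgroup H) :=
      (Subgroup.prodEquiv A ⊤).toEquiv
    have eB : (B.prod (⊤ : Subgroup H) : Type _) ≃ B × (⊤ : Subgroup H) :=
      (Subgroup.prodEquiv B ⊤).toEquiv
    rw [Nat.card_congr eA, Nat.card_congr eB, Nat.card_prod, Nat.card_prod,
      heq A hA B hB]

open scoped Classical in
lemma right_equal_covering (G H : Type*) [Group G] [Group H]
    (C : Finset (Subgroup H)) (hC : IsEqualCovering C) :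
    IsEqualCovering (C.image fun A => (⊤ : Subgroup G).prod A) := by
  obtain ⟨⟨hne, hcov⟩, heq⟩ := hC
  refine ⟨⟨?_, ?_⟩, ?_⟩
  · intro K hK
    simp only [Finset.mem_image] at hK
    obtain ⟨A, hA, rfl⟩ := hK
    intro htop
    apply hne A hA
    ext h
    simp only [Subgroup.mem_top, iff_true]
    have : ((1 : G), h) ∈ (⊤ : Subgroup G).prod A := htop ▸ Subgroup.mem_top _
    exact this.2
  · rintro ⟨g, h⟩
    obtain ⟨A, hA, hh⟩ := hcov h
    exact ⟨(⊤ : Subgroup G).prod A, Finset.mem_image_of_mem _ hA, Subgroup.mem_top _, hh⟩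
  · intro K hK L hL
    simp only [Finset.mem_image] at hK hL
    obtain ⟨A, hA, rfl⟩ := hK
    obtain ⟨B, hB, rfl⟩ := hL
    have eA : ((⊤ : Subgroup G).prod A : Type _) ≃ (⊤ : Subgroup G) × A :=
      (Subgroup.prodEquiv ⊤ A).toEquiv
    have eB : ((⊤ : Subgroup G).prod B : Type _) ≃ (⊤ : Subgroup G) × B :=
      (Subgroup.prodEquiv ⊤ B).toEquiv
    rw [Nat.card_congr eA, Nat.card_congr eB, Nat.card_prod, Nat.card_prod,
      heq A hA B hB]

open scoped Classical in
/-- If at least one of the finite groups `G`, `H` has an equal covering, then so does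
`G × H`; specifically, if `{G_i}` is an equal covering of `G` then `{G_i × H}` is an
equal covering of `G × H`. -/
theorem prod_equal_covering (G H : Type*) [Group G] [Group H] [Finite G] [Finite H] :
    ((∃ C : Finset (Subgroup G), IsEqualCovering C) ∨
        (∃ C : Finset (Subgroup H), IsEqualCovering C) →
      ∃ C : Finset (Subgroup (G × H)), IsEqualCovering C) ∧
    (∀ C : Finset (Subgroup G), IsEqualCovering C →
      IsEqualCovering (C.image fun A => A.prod (⊤ : Subgroup H))) := by
  constructor
  · rintro (⟨C, hC⟩ | ⟨C, hC⟩)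
    · exact ⟨_, left_equal_covering G H C hC⟩
    · exact ⟨_, right_equal_covering G H C hC⟩
  · exact fun C hC => left_equal_covering G H C hC
end

section
/- Every finite non-cyclic nilpotent group has an equal covering. -/
open Subgroup

/-- The center of a nontrivial nilpotent group is nontrivial. -/
lemma center_ne_bot_of_isNilpotent (G : Type*) [Group G] [Nontrivial G]
    (h : Group.IsNilpotent G) : Subgroup.center G ≠ ⊥ := by
  intro hc
  have hall : ∀ k, Subgroup.upperCentralSeries G k = ⊥ := by
    intro k
    induction k with
    | zero => exact Subgroup.upperCentralSeries_zero G
    | succ k ihk =>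
      ext g
      rw [Subgroup.mem_upperCentralSeries_succ_iff]
      simp only [ihk, Subgroup.mem_bot]
      constructor
      · intro hcomm
        have hg : g ∈ Subgroup.center G := by
          rw [Subgroup.mem_center_iff]
          intro y
          have h2 : g * y * g⁻¹ = y := mul_inv_eq_one.mp (hcomm y)
          exact (mul_inv_eq_iff_eq_mul.mp h2).symm
        rw [hc, Subgroup.mem_bot] at hg
        exact hg
      · rintro rfl
        intro y
        group
  obtain ⟨n, hn⟩ := h.nilpotent
  obtain ⟨a, b, hab⟩ := exists_pair_ne G
  apply hab
  have ha : a ∈ Subgroup.upperCentralSeries G n := hn ▸ Subgroup.mem_top a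
  have hb : b ∈ Subgroup.upperCentralSeries G n := hn ▸ Subgroup.mem_top b
  rw [hall n, Subgroup.mem_bot] at ha hb
  rw [ha, hb]

/-- An equal covering can be pulled back along a surjective homomorphism. -/
lemma comap_equal_covering {G Q : Type*} [Group G] [Group Q] [Finite G] [Finite Q]
    [DecidableEq (Subgroup G)]
    (f : G →* Q) (hf : Function.Surjective f) {C : Finset (Subgroup Q)}
    (hC : IsEqualCovering C) :
    IsEqualCovering (C.image (Subgroup.comap f)) := by
  obtain ⟨⟨hprop, hcov⟩, heq⟩ := hC
  refine ⟨⟨?_, ?_⟩, ?_⟩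
  · intro H' hH'
    obtain ⟨H, hH, rfl⟩ := Finset.mem_image.mp hH'
    intro htop
    apply hprop H hH
    ext q
    simp only [Subgroup.mem_top, iff_true]
    obtain ⟨g, rfl⟩ := hf q
    have : g ∈ Subgroup.comap f H := htop ▸ Subgroup.mem_top g
    exact this
  · intro g
    obtain ⟨H, hH, hgH⟩ := hcov (f g)
    exact ⟨Subgroup.comap f H, Finset.mem_image_of_mem _ hH, hgH⟩
  · intro H' hH' K' hK'
    obtain ⟨H, hH, rfl⟩ := Finset.mem_image.mp hH'
    obtain ⟨K, hK, rfl⟩ := Finset.mem_image.mp hK'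
    have hHK : Nat.card H = Nat.card K := heq H hH K hK
    have hi : H.index = K.index := by
      have h1 := Subgroup.card_mul_index H
      have h2 := Subgroup.card_mul_index K
      rw [hHK] at h1
      have hpos : 0 < Nat.card K := Nat.card_pos
      exact Nat.eq_of_mul_eq_mul_left hpos (h1.trans h2.symm)
    have h1 := Subgroup.card_mul_index (Subgroup.comap f H)
    have h2 := Subgroup.card_mul_index (Subgroup.comap f K)
    rw [Subgroup.index_comap_of_surjective _ hf] at h1 h2
    rw [hi] at h1
    have hpos : K.index ≠ 0 := Subgroup.index_ne_zero_of_finite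
    exact Nat.eq_of_mul_eq_mul_right (Nat.pos_of_ne_zero hpos) (h1.trans h2.symm)

/-- If the quotient by a normal subgroup is cyclic, there is an element `x` such that every
element of the group lies in a coset `x ^ a • N`. -/
lemma exists_decomp_of_quotient_cyclic {G : Type*} [Group G] (N : Subgroup G) [N.Normal]
    (h : IsCyclic (G ⧸ N)) : ∃ x : G, ∀ g : G, ∃ a : ℤ, (x ^ a)⁻¹ * g ∈ N := by
  obtain ⟨q0, hq0⟩ := IsCyclic.exists_generator (α := G ⧸ N)
  obtain ⟨x, rfl⟩ := QuotientGroup.mk_surjective q0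
  refine ⟨x, fun g => ?_⟩
  obtain ⟨a, ha⟩ := hq0 (g : G ⧸ N)
  have ha' : ((x : G ⧸ N)) ^ a = (g : G ⧸ N) := ha
  rw [← QuotientGroup.mk_zpow] at ha'
  exact ⟨a, (QuotientGroup.eq).mp ha'⟩

universe u

lemma aux_equal_covering (n : ℕ) : ∀ (G : Type u) [Group G] [Finite G], Nat.card G ≤ n →
    Group.IsNilpotent G → ¬IsCyclic G → ∃ C : Finset (Subgroup G), IsEqualCovering C := by
  induction n using Nat.strong_induction_on with
  | _ n ih =>
  intro G _ _ hn hnil hnc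
  haveI := hnil
  classical
  by_cases hex : ∃ N : Subgroup G, N.Normal ∧ N ≠ ⊥ ∧
      ¬∃ x : G, ∀ g : G, ∃ a : ℤ, (x ^ a)⁻¹ * g ∈ N
  · obtain ⟨N, hNn, hNb, hNc'⟩ := hex
    haveI := hNn
    have hNc : ¬IsCyclic (G ⧸ N) := fun h => hNc' (exists_decomp_of_quotient_cyclic N h)
    have hlt : Nat.card (G ⧸ N) < Nat.card G := by
      rw [Subgroup.card_eq_card_quotient_mul_card_subgroup N]
      have h1 : 1 < Nat.card N := (Subgroup.one_lt_card_iff_ne_bot N).mpr hNb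
      have h2 : 0 < Nat.card (G ⧸ N) := Nat.card_pos
      exact (Nat.lt_mul_iff_one_lt_right h2).mpr h1
    obtain ⟨C, hC⟩ := ih (Nat.card (G ⧸ N)) (lt_of_lt_of_le hlt hn) (G ⧸ N) le_rfl
      inferInstance hNc
    exact ⟨C.image (Subgroup.comap (QuotientGroup.mk' N)),
      comap_equal_covering _ (QuotientGroup.mk'_surjective N) hC⟩
  · push_neg at hex
    -- hex : ∀ N, N.Normal → N ≠ ⊥ → ∃ x, ∀ g, ∃ a, (x ^ a)⁻¹ * g ∈ N
    have hnt : Nontrivial G := by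
      rcases subsingleton_or_nontrivial G with hs | hnt
      · exact absurd isCyclic_of_subsingleton hnc
      · exact hnt
    -- a central element z of prime order p
    have hcnt : Subgroup.center G ≠ ⊥ := center_ne_bot_of_isNilpotent G hnil
    have h1lt : 1 < Nat.card (Subgroup.center G) :=
      (Subgroup.one_lt_card_iff_ne_bot _).mpr hcnt
    obtain ⟨p, hp, hpdvd⟩ := Nat.exists_prime_and_dvd (Nat.ne_of_gt h1lt)
    haveI : Fact p.Prime := ⟨hp⟩
    haveI : NeZero p := ⟨hp.pos.ne'⟩
    obtain ⟨z0, hz0⟩ := exists_prime_orderOf_dvd_card' (G := Subgroup.center G) p hpdvd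
    set z : G := (z0 : G) with hzdef
    have hz : z ∈ Subgroup.center G := z0.2
    have hzord : orderOf z = p := by rw [hzdef, Subgroup.orderOf_coe]; exact hz0
    have hzne : z ≠ 1 := by
      intro h
      rw [h, orderOf_one] at hzord
      exact hp.one_lt.ne' hzord.symm
    set N : Subgroup G := Subgroup.zpowers z with hNdef
    have hNle : N ≤ Subgroup.center G := Subgroup.zpowers_le.mpr hz
    have hNnorm : N.Normal := by
      constructor
      intro a ha g
      have hcn : g * a = a * g := Subgroup.mem_center_iff.mp (hNle ha) g
      rw [hcn, mul_assoc, mul_inv_cancel, mul_one]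
      exact ha
    have hNbot : N ≠ ⊥ := by rw [hNdef, Ne, Subgroup.zpowers_eq_bot]; exact hzne
    obtain ⟨x, hx⟩ := hex N hNnorm hNbot
    -- every element of G is x ^ a * z ^ b
    have hdecomp : ∀ g : G, ∃ a b : ℤ, g = x ^ a * z ^ b := by
      intro g
      obtain ⟨a, ha⟩ := hx g
      obtain ⟨b, hb⟩ := Subgroup.mem_zpowers_iff.mp ha
      exact ⟨a, b, by rw [hb, ← mul_assoc, mul_inv_cancel, one_mul]⟩
    -- G is commutative
    have hzcom : ∀ (j : ℤ) (w : G), Commute w (z ^ j) := by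
      intro j w
      exact Subgroup.mem_center_iff.mp (Subgroup.zpow_mem _ hz j) w
    have hkey : ∀ a b c d : ℤ, (x ^ a * z ^ b) * (x ^ c * z ^ d) = x ^ (a + c) * z ^ (b + d) := by
      intro a b c d
      rw [mul_assoc (x ^ a) (z ^ b), ← mul_assoc (z ^ b) (x ^ c), ← (hzcom b (x ^ c)).eq,
        mul_assoc (x ^ c) (z ^ b), ← mul_assoc (x ^ a), ← zpow_add, ← zpow_add]
    have comm : ∀ a b : G, a * b = b * a := by
      intro g1 g2
      obtain ⟨a, b, rfl⟩ := hdecomp g1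
      obtain ⟨c, d, rfl⟩ := hdecomp g2
      rw [hkey, hkey, add_comm c a, add_comm d b]
    -- x is not a power of z, z is not a power of x
    have hxnz : x ∉ Subgroup.zpowers z := by
      intro hmem
      apply hnc
      obtain ⟨c, hc⟩ := Subgroup.mem_zpowers_iff.mp hmem
      refine ⟨⟨z, fun g => ?_⟩⟩
      obtain ⟨a, b, rfl⟩ := hdecomp g
      exact ⟨c * a + b, by show z ^ (c * a + b) = _; rw [zpow_add, zpow_mul, hc]⟩
    have hzx : z ∉ Subgroup.zpowers x := by
      intro hmem
      apply hnc
      obtain ⟨c, hc⟩ := Subgroup.mem_zpowers_iff.mp hmem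
      refine ⟨⟨x, fun g => ?_⟩⟩
      obtain ⟨a, b, rfl⟩ := hdecomp g
      exact ⟨a + c * b, by show x ^ (a + c * b) = _; rw [zpow_add, zpow_mul, hc]⟩
    -- powers of z that are powers of x are trivial
    have hdisj : ∀ c : ℤ, z ^ c ∈ Subgroup.zpowers x → z ^ c = 1 := by
      intro c hcmem
      by_contra hne
      have h1 : Subgroup.zpowers (z ^ c) ≤ Subgroup.zpowers z :=
        Subgroup.zpowers_le.mpr (Subgroup.zpow_mem _ (Subgroup.mem_zpowers z) c)
      have hord : orderOf (z ^ c) = p := by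
        have hdvd : orderOf (z ^ c) ∣ p := by
          apply orderOf_dvd_of_pow_eq_one
          rw [← zpow_natCast, ← zpow_mul, mul_comm, zpow_mul, zpow_natCast, ← hzord,
            pow_orderOf_eq_one, one_zpow]
        rcases (Nat.Prime.eq_one_or_self_of_dvd hp _ hdvd) with h | h
        · exact absurd (orderOf_eq_one_iff.mp h) hne
        · exact h
      have h2 : Subgroup.zpowers (z ^ c) = Subgroup.zpowers z := by
        apply Subgroup.eq_of_le_of_card_ge h1
        rw [Nat.card_zpowers, Nat.card_zpowers, hord, hzord]
      have h3 : z ∈ Subgroup.zpowers (z ^ c) := h2 ▸ Subgroup.mem_zpowers z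
      exact hzx (Subgroup.zpowers_le.mpr hcmem h3)
    set m : ℕ := orderOf x with hm
    have hmpos : 0 < m := orderOf_pos x
    have hzp : z ^ (p : ℤ) = 1 := by
      rw [zpow_natCast, ← hzord, pow_orderOf_eq_one]
    -- p divides m
    have hpm : p ∣ m := by
      by_contra hpm
      have hcop : Nat.Coprime m p := ((Nat.Prime.coprime_iff_not_dvd hp).mpr hpm).symm
      have hcxz : Commute x z := comm x z
      have hco : orderOf (x * z) = m * p := by
        rw [hcxz.orderOf_mul_eq_mul_orderOf_of_coprime (by rw [← hm, hzord]; exact hcop)]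
        rw [← hm, hzord]
      -- card G ≤ m * p
      have hsurj : Function.Surjective
          (fun ij : Fin m × Fin p => x ^ (ij.1 : ℕ) * z ^ (ij.2 : ℕ)) := by
        intro g
        obtain ⟨a, b, rfl⟩ := hdecomp g
        have hm0 : ((m : ℤ)) ≠ 0 := by exact_mod_cast hmpos.ne'
        have hp0 : ((p : ℤ)) ≠ 0 := by exact_mod_cast hp.pos.ne'
        have ha1 : 0 ≤ a % (m : ℤ) := Int.emod_nonneg a hm0
        have ha2 : a % (m : ℤ) < m := Int.emod_lt_of_pos a (by exact_mod_cast hmpos)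
        have hb1 : 0 ≤ b % (p : ℤ) := Int.emod_nonneg b hp0
        have hb2 : b % (p : ℤ) < p := Int.emod_lt_of_pos b (by exact_mod_cast hp.pos)
        refine ⟨⟨⟨(a % (m : ℤ)).toNat, by omega⟩, ⟨(b % (p : ℤ)).toNat, by omega⟩⟩, ?_⟩
        simp only
        rw [← zpow_natCast x, ← zpow_natCast z, Int.toNat_of_nonneg ha1,
          Int.toNat_of_nonneg hb1]
        congr 1
        · apply orderOf_dvd_sub_iff_zpow_eq_zpow.mp
          rw [← hm]
          exact ⟨-(a / (m : ℤ)), by rw [Int.emod_def]; ring⟩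
        · apply orderOf_dvd_sub_iff_zpow_eq_zpow.mp
          rw [hzord]
          exact ⟨-(b / (p : ℤ)), by rw [Int.emod_def]; ring⟩
      have hle : Nat.card G ≤ m * p := by
        have := Nat.card_le_card_of_surjective _ hsurj
        simpa [Nat.card_prod] using this
      have hdvd : m * p ∣ Nat.card G := hco ▸ orderOf_dvd_natCard (x * z)
      have heqc : orderOf (x * z) = Nat.card G := by
        rw [hco]
        exact Nat.le_antisymm (Nat.le_of_dvd Nat.card_pos hdvd) hle
      exact hnc (isCyclic_of_orderOf_eq_card _ heqc)
    by_cases hKtriv : x ^ (p : ℕ) = 1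
    · -- here `orderOf x = p` and `G ≅ C_p × C_p`; build the covering explicitly
      have hmp : m = p := by
        rcases (Nat.Prime.eq_one_or_self_of_dvd hp _ (orderOf_dvd_of_pow_eq_one hKtriv)) with h | h
        · exfalso
          have : x = 1 := orderOf_eq_one_iff.mp h
          exact hxnz (this ▸ one_mem _)
        · exact h
      have hxp : x ^ (p : ℤ) = 1 := by rw [zpow_natCast]; exact hKtriv
      -- the subgroups of the covering
      have hordxi : ∀ i : ℕ, orderOf (x * z ^ (i : ℤ)) = p := by
        intro i
        have hcxz : Commute x (z ^ (i : ℤ)) := comm _ _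
        have h1 : (x * z ^ (i : ℤ)) ^ (p : ℕ) = 1 := by
          rw [← zpow_natCast, hcxz.mul_zpow, hxp, one_mul, ← zpow_mul, mul_comm, zpow_mul,
            hzp, one_zpow]
        have h2 : x * z ^ (i : ℤ) ≠ 1 := by
          intro h
          apply hxnz
          rw [eq_inv_of_mul_eq_one_left h, ← zpow_neg]
          exact Subgroup.zpow_mem _ (Subgroup.mem_zpowers z) _
        rcases (Nat.Prime.eq_one_or_self_of_dvd hp _ (orderOf_dvd_of_pow_eq_one h1)) with h | h
        · exact absurd (orderOf_eq_one_iff.mp h) h2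
        · exact h
      have hznotin : ∀ i : ℕ, z ∉ Subgroup.zpowers (x * z ^ (i : ℤ)) := by
        intro i hmem
        obtain ⟨k, hk⟩ := Subgroup.mem_zpowers_iff.mp hmem
        have hcxz : Commute x (z ^ (i : ℤ)) := comm _ _
        rw [hcxz.mul_zpow, ← zpow_mul] at hk
        -- hk : x ^ k * z ^ (i * k) = z
        have h3 : x ^ k = z ^ (1 - (i : ℤ) * k) := by
          rw [zpow_sub, zpow_one]
          exact eq_mul_inv_of_mul_eq hk
        have h4 : z ^ (1 - (i : ℤ) * k) = 1 := by
          apply hdisj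
          rw [← h3]
          exact Subgroup.zpow_mem _ (Subgroup.mem_zpowers x) k
        have h5 : (p : ℤ) ∣ 1 - (i : ℤ) * k := by
          have := orderOf_dvd_iff_zpow_eq_one.mpr h4
          rwa [hzord] at this
        have h6 : (p : ℤ) ∣ k := by
          have hxk1 : x ^ k = 1 := by rw [h3, h4]
          have := orderOf_dvd_iff_zpow_eq_one.mpr hxk1
          rwa [← hm, hmp] at this
        have h7 : (p : ℤ) ∣ 1 := by
          have h8 : (p : ℤ) ∣ (i : ℤ) * k := h6.mul_left _
          have := dvd_add h5 h8
          simpa using this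
        have : p ∣ 1 := by exact_mod_cast h7
        exact hp.one_lt.ne' (Nat.dvd_one.mp this)
      set C : Finset (Subgroup G) :=
        insert (Subgroup.zpowers z)
          ((Finset.range p).image fun i : ℕ => Subgroup.zpowers (x * z ^ (i : ℤ))) with hC
      have hmemC : ∀ H ∈ C, Nat.card H = p := by
        intro H hH
        rw [hC, Finset.mem_insert] at hH
        rcases hH with rfl | hH
        · rw [Nat.card_zpowers, hzord]
        · obtain ⟨i, _, rfl⟩ := Finset.mem_image.mp hH
          rw [Nat.card_zpowers, hordxi i]
      refine ⟨C, ⟨⟨?_, ?_⟩, ?_⟩⟩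
      · intro H hH
        rw [hC, Finset.mem_insert] at hH
        rcases hH with rfl | hH
        · intro htop
          exact hxnz (htop ▸ Subgroup.mem_top x)
        · obtain ⟨i, _, rfl⟩ := Finset.mem_image.mp hH
          intro htop
          exact hznotin i (htop ▸ Subgroup.mem_top z)
      · intro g
        obtain ⟨a, b, rfl⟩ := hdecomp g
        by_cases hpa : (p : ℤ) ∣ a
        · refine ⟨Subgroup.zpowers z, by rw [hC]; exact Finset.mem_insert_self _ _, ?_⟩
          have hxa : x ^ a = 1 := by
            apply orderOf_dvd_iff_zpow_eq_one.mp
            rwa [← hm, hmp]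
          rw [hxa, one_mul]
          exact Subgroup.zpow_mem _ (Subgroup.mem_zpowers z) b
        · have haz : ((a : ZMod p)) ≠ 0 := by
            rwa [Ne, ZMod.intCast_zmod_eq_zero_iff_dvd]
          set i : ℕ := (((b : ZMod p)) * ((a : ZMod p))⁻¹).val with hi
          refine ⟨Subgroup.zpowers (x * z ^ (i : ℤ)), ?_, ?_⟩
          · rw [hC]
            apply Finset.mem_insert_of_mem
            exact Finset.mem_image_of_mem _ (Finset.mem_range.mpr (ZMod.val_lt _))
          · refine ⟨a, ?_⟩
            show (x * z ^ (i : ℤ)) ^ a = x ^ a * z ^ b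
            have hcxz : Commute x (z ^ (i : ℤ)) := comm _ _
            rw [hcxz.mul_zpow, ← zpow_mul]
            congr 1
            apply orderOf_dvd_sub_iff_zpow_eq_zpow.mp
            rw [hzord]
            rw [← ZMod.intCast_zmod_eq_zero_iff_dvd]
            push_cast
            rw [hi]
            rw [ZMod.natCast_val, ZMod.cast_id]
            rw [mul_assoc, inv_mul_cancel₀ haz, mul_one, sub_self]
      · intro H hH K hK
        rw [hmemC H hH, hmemC K hK]
    · -- otherwise `K = ⟨x ^ p⟩` is a nontrivial normal subgroup whose quotient
      -- cannot be cyclic: contradiction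
      exfalso
      set K : Subgroup G := Subgroup.zpowers (x ^ (p : ℕ)) with hKdef
      have hKnorm : K.Normal := by
        constructor
        intro a ha g
        rw [← comm a g, mul_assoc, mul_inv_cancel, mul_one]
        exact ha
      have hKbot : K ≠ ⊥ := by rw [hKdef, Ne, Subgroup.zpowers_eq_bot]; exact hKtriv
      obtain ⟨y, hy⟩ := hex K hKnorm hKbot
      -- every p-th power is in K
      have hgp : ∀ g : G, g ^ (p : ℕ) ∈ K := by
        intro g
        obtain ⟨a, b, rfl⟩ := hdecomp g
        have hcxz : Commute (x ^ a) (z ^ b) := comm _ _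
        have hzb : (z ^ b) ^ (p : ℤ) = 1 := by
          rw [← zpow_mul, mul_comm, zpow_mul, hzp, one_zpow]
        have : (x ^ a * z ^ b) ^ (p : ℕ) = (x ^ (p : ℤ)) ^ a := by
          rw [← zpow_natCast, hcxz.mul_zpow, hzb, mul_one, ← zpow_mul, mul_comm a ((p : ℤ)),
            zpow_mul]
        rw [this]
        have hxpK : x ^ (p : ℤ) ∈ K := by
          rw [zpow_natCast]
          exact Subgroup.mem_zpowers _
        exact Subgroup.zpow_mem _ hxpK a
      -- card G ≤ p * card K
      have hsurj : Function.Surjective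
          (fun ik : Fin p × K => y ^ (ik.1 : ℕ) * (ik.2 : G)) := by
        intro g
        obtain ⟨a, ha⟩ := hy g
        have hp0 : ((p : ℤ)) ≠ 0 := by exact_mod_cast hp.pos.ne'
        have ha1 : 0 ≤ a % (p : ℤ) := Int.emod_nonneg a hp0
        have ha2 : a % (p : ℤ) < p := Int.emod_lt_of_pos a (by exact_mod_cast hp.pos)
        set k0 : G := (y ^ a)⁻¹ * g with hk0
        have hyp : y ^ (p : ℤ) ∈ K := by
          rw [zpow_natCast]
          exact hgp y
        have hk' : (y ^ ((p : ℤ) * (a / (p : ℤ)))) * k0 ∈ K := by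
          rw [zpow_mul]
          exact Subgroup.mul_mem _ (Subgroup.zpow_mem _ hyp _) ha
        refine ⟨⟨⟨(a % (p : ℤ)).toNat, by omega⟩, ⟨_, hk'⟩⟩, ?_⟩
        simp only
        rw [← zpow_natCast y, Int.toNat_of_nonneg ha1]
        rw [← mul_assoc, ← zpow_add]
        have : a % (p : ℤ) + (p : ℤ) * (a / (p : ℤ)) = a := Int.emod_add_mul_ediv a (p : ℤ)
        rw [this, hk0, mul_inv_cancel_left]
      have hcK : Nat.card K = m / p := by
        rw [hKdef, Nat.card_zpowers, orderOf_pow, ← hm, Nat.gcd_eq_right hpm]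
      have hle : Nat.card G ≤ m := by
        have h1 := Nat.card_le_card_of_surjective _ hsurj
        simp only [Nat.card_prod, Nat.card_eq_fintype_card, Fintype.card_fin] at h1
        calc Nat.card G ≤ p * Nat.card K := h1
          _ = p * (m / p) := by rw [hcK]
          _ = m := Nat.mul_div_cancel' hpm
      have hxtop : Subgroup.zpowers x = ⊤ := by
        apply Subgroup.eq_top_of_card_eq
        apply le_antisymm (Subgroup.card_le_card_group _)
        rw [Nat.card_zpowers, ← hm]
        exact hle
      exact hzx (hxtop ▸ Subgroup.mem_top z)

/-- Every finite non-cyclic nilpotent group has an equal covering. -/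
theorem nilpotent_equal_covering (G : Type*) [Group G] [Finite G]
    (hnil : Group.IsNilpotent G) (hnc : ¬IsCyclic G) :
    ∃ C : Finset (Subgroup G), IsEqualCovering C :=
  aux_equal_covering (Nat.card G) G le_rfl hnil hnc
end

section
/- If G is a finite group whose order is a product of distinct primes each with multiplicity one (i.e., |G| is squarefree), then G has no equal covering. -/
/-- If `G` is a finite group of squarefree order (a product of distinct primes, each
with multiplicity one), then `G` has no equal covering. -/
theorem squarefree_order_no_equal_covering (G : Type*) [Group G] [Finite G]
    (hsf : Squarefree (Nat.card G)) :
    ¬∃ C : Finset (Subgroup G), IsEqualCovering C := by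
  rintro ⟨C, ⟨⟨hprop, hcov⟩, heq⟩⟩
  obtain ⟨H₀, hH₀C, -⟩ := hcov 1
  set n := Nat.card H₀ with hn
  -- every prime dividing |G| divides n
  have hprimes : ∀ p : ℕ, p.Prime → p ∣ Nat.card G → p ∣ n := by
    intro p hp hpd
    haveI : Fact p.Prime := ⟨hp⟩
    obtain ⟨x, hx⟩ := exists_prime_orderOf_dvd_card' (G := G) p hpd
    obtain ⟨H, hHC, hxH⟩ := hcov x
    have h1 : orderOf x ∣ Nat.card H := by
      have : orderOf (⟨x, hxH⟩ : H) ∣ Nat.card H := orderOf_dvd_natCard _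
      rwa [Subgroup.orderOf_mk] at this
    rw [hx] at h1
    exact h1.trans (dvd_of_eq (heq H hHC H₀ hH₀C))
  have hG0 : Nat.card G ≠ 0 := Nat.card_pos.ne'
  have hn0 : n ≠ 0 := Nat.card_pos.ne'
  -- |G| divides n since |G| is squarefree
  have hdvd : Nat.card G ∣ n := by
    rw [← Nat.factorization_le_iff_dvd hG0 hn0]
    intro p
    rcases Nat.eq_zero_or_pos ((Nat.card G).factorization p) with h | h
    · simp [h]
    · have hp : p.Prime := Nat.prime_of_mem_primeFactors
        (Nat.support_factorization (n := Nat.card G) ▸ Finsupp.mem_support_iff.2 h.ne')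
      have hpn : p ∣ n := hprimes p hp (Nat.dvd_of_factorization_pos h.ne')
      have h1 : (Nat.card G).factorization p ≤ 1 :=
        hsf.natFactorization_le_one p
      have h2 : 1 ≤ n.factorization p :=
        (Nat.Prime.factorization_pos_of_dvd hp hn0 hpn)
      omega
  have hle : n ∣ Nat.card G := Subgroup.card_subgroup_dvd_card H₀
  have : n = Nat.card G := Nat.dvd_antisymm hle hdvd
  exact hprop H₀ hH₀C (Subgroup.eq_top_of_card_eq H₀ this)
end

section
/- If H is a normal subgroup of a finite group G and the quotient group G/H has an equal covering, then G has an equal covering. -/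
/-- If `H ⊴ G` with `G` finite and the quotient `G/H` has an equal covering, then `G`
has an equal covering. -/
theorem equal_covering_of_quotient {G : Type*} [Group G] [Finite G]
    (H : Subgroup G) [H.Normal]
    (hq : ∃ C : Finset (Subgroup (G ⧸ H)), IsEqualCovering C) :
    ∃ C : Finset (Subgroup G), IsEqualCovering C := by
  classical
  obtain ⟨C, ⟨⟨hproper, hcover⟩, hequal⟩⟩ := hq
  have hsurj : Function.Surjective (QuotientGroup.mk' H) := QuotientGroup.mk'_surjective H
  refine ⟨C.image (Subgroup.comap (QuotientGroup.mk' H)), ⟨⟨?_, ?_⟩, ?_⟩⟩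
  · intro K hK
    obtain ⟨K', hK', rfl⟩ := Finset.mem_image.mp hK
    intro htop
    apply hproper K' hK'
    rw [eq_top_iff]
    intro x _
    obtain ⟨g, rfl⟩ := hsurj x
    have : g ∈ Subgroup.comap (QuotientGroup.mk' H) K' := htop ▸ Subgroup.mem_top g
    exact this
  · intro g
    obtain ⟨K', hK', hg⟩ := hcover (QuotientGroup.mk' H g)
    exact ⟨Subgroup.comap (QuotientGroup.mk' H) K', Finset.mem_image_of_mem _ hK', hg⟩
  · intro A hA B hB
    obtain ⟨A', hA', rfl⟩ := Finset.mem_image.mp hA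
    obtain ⟨B', hB', rfl⟩ := Finset.mem_image.mp hB
    have hidx : ∀ K : Subgroup (G ⧸ H),
        (Subgroup.comap (QuotientGroup.mk' H) K).index = K.index := fun K =>
      Subgroup.index_comap_of_surjective K hsurj
    have hne : Nat.card G ≠ 0 := Nat.card_pos.ne'
    have hidxAB : A'.index = B'.index := by
      have h1 := Subgroup.card_mul_index A'
      have h2 := Subgroup.card_mul_index B'
      have hc : Nat.card A' = Nat.card B' := hequal A' hA' B' hB'
      have hcpos : 0 < Nat.card A' := Nat.card_pos
      rw [hc] at h1
      have := h1.trans h2.symm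
      exact Nat.eq_of_mul_eq_mul_left (hc ▸ hcpos) this
    have h1 := Subgroup.card_mul_index (Subgroup.comap (QuotientGroup.mk' H) A')
    have h2 := Subgroup.card_mul_index (Subgroup.comap (QuotientGroup.mk' H) B')
    rw [hidx A', hidxAB] at h1
    rw [hidx B'] at h2
    have hipos : 0 < B'.index := Nat.pos_of_ne_zero (by
      intro h0
      rw [h0, mul_zero] at h2
      exact hne h2.symm)
    have := h1.trans h2.symm
    exact Nat.eq_of_mul_eq_mul_right hipos this
end

section
/- If G is a finite non-cyclic simple group whose exponent equals |G|/2, then G has no equal covering. -/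
/-- A subgroup of index two is normal. -/
lemma normal_of_index_two' {G : Type*} [Group G] (H : Subgroup G) (h : H.index = 2) :
    H.Normal := by
  constructor
  intro n hn g
  have h1 : g * n ∈ H ↔ (g ∈ H ↔ n ∈ H) := Subgroup.mul_mem_iff_of_index_two h
  have h2 : (g * n) * g⁻¹ ∈ H ↔ (g * n ∈ H ↔ g⁻¹ ∈ H) := Subgroup.mul_mem_iff_of_index_two h
  have h3 : g⁻¹ ∈ H ↔ g ∈ H := H.inv_mem_iff
  have : (g * n) * g⁻¹ ∈ H := by
    rw [h2, h1, h3]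
    tauto
  simpa [mul_assoc] using this

/-- If `G` is a finite non-cyclic simple group whose exponent equals `|G|/2`, then `G`
has no equal covering. -/
theorem simple_exponent_half_no_equal_covering (G : Type*) [Group G] [Finite G]
    (hsimple : IsSimpleGroup G) (hnc : ¬IsCyclic G)
    (hexp : Monoid.exponent G = Nat.card G / 2) :
    ¬∃ C : Finset (Subgroup G), IsEqualCovering C := by
  rintro ⟨C, ⟨⟨hproper, hcover⟩, hsame⟩⟩
  obtain ⟨H, hHC, -⟩ := hcover 1
  set e := Monoid.exponent G with he
  set cG := Nat.card G with hcG
  have hcGpos : 0 < cG := Nat.card_pos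
  have hepos : 0 < e := Monoid.exponent_pos.mpr (Monoid.ExponentExists.of_finite)
  -- exponent 1 would make G trivial hence cyclic
  have hene1 : e ≠ 1 := by
    intro h1
    have : Subsingleton G := by
      constructor
      intro a b
      have ha := Monoid.pow_exponent_eq_one a
      have hb := Monoid.pow_exponent_eq_one b
      rw [← he, h1, pow_one] at ha hb
      rw [ha, hb]
    exact hnc (isCyclic_of_subsingleton)
  have he2 : 2 ≤ e := by omega
  -- exponent divides card H
  have hdvd : e ∣ Nat.card H := by
    rw [he, Monoid.exponent_dvd_iff_forall_pow_eq_one]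
    intro g
    obtain ⟨K, hKC, hgK⟩ := hcover g
    have hcard : Nat.card K = Nat.card H := hsame K hKC H hHC
    have horder : orderOf g ∣ Nat.card K := Subgroup.orderOf_dvd_natCard K hgK
    rw [hcard] at horder
    exact orderOf_dvd_iff_pow_eq_one.mp horder
  -- card H divides cG and is not cG
  have hmul : Nat.card H * H.index = cG := Subgroup.card_mul_index H
  have hHne : Nat.card H ≠ cG := fun h => hproper H hHC (Subgroup.eq_top_of_card_eq H h)
  have hHpos : 0 < Nat.card H := Nat.card_pos
  -- e ≤ card H
  have hele : e ≤ Nat.card H := Nat.le_of_dvd hHpos hdvd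
  -- card H ≤ cG / 2 = e : since card H proper divisor
  have hidx2 : 2 ≤ H.index := by
    rcases Nat.lt_or_ge H.index 2 with h | h
    · interval_cases hi : H.index <;> omega
    · exact h
  have hle : 2 * Nat.card H ≤ cG := by
    calc 2 * Nat.card H ≤ H.index * Nat.card H := Nat.mul_le_mul_right _ hidx2
    _ = cG := by rw [mul_comm]; exact hmul
  have hcGe : e = cG / 2 := hexp
  have hle2 : Nat.card H ≤ e := by omega
  have hHe : Nat.card H = e := le_antisymm hle2 hele
  -- now index = 2
  have hidx : H.index = 2 := by
    have h2e : 2 * e ≤ cG := by omega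
    have hcGlt : cG < 2 * (e + 1) := by omega
    -- cG = e * index, 2e ≤ cG < 2e + 2, so e * index ∈ {2e, 2e+1}
    have : e * H.index = cG := by rw [← hHe]; exact hmul
    rcases Nat.lt_or_ge H.index 3 with h | h
    · interval_cases hi : H.index <;> omega
    · nlinarith
  -- so H normal, contradiction with simplicity
  have hnormal : H.Normal := normal_of_index_two' H hidx
  rcases hsimple.eq_bot_or_eq_top_of_normal H hnormal with hbot | htop
  · rw [hbot] at hHe
    simp [Subgroup.card_bot] at hHe
    omega
  · exact hproper H hHC htop
end
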